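/- An entire function f with real coefficients preserves nonnegativity of block upper-triangular matrices of the form [[A, B], [0, C]] with A of size n1×n1 and C of size n2×n2 (i.e., f of every such matrix with entrywise nonnegative blocks A, B, C is entrywise nonnegative) if and only if: (a) f ∈ F_N where N = max(n1, n2); and (b) for all entrywise nonnegative real matrices A (n1×n1), B (n1×n2), C (n2×n2) such that A and C have disjoint complex spectra, the unique matrix X solving A·X − X·C = B satisfies f(A)·X − X·f(C) ≥ 0 entrywise. -/

import Mathlib

/-- `f(A) := ∑_{j=0}^∞ a_j A^j` for a square real matrix `A`. -/
noncomputable def fmat (a : ℕ → ℝ) {m : Type*} [Fintype m] [DecidableEq m]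
    (A : Matrix m m ℝ) : Matrix m m ℝ :=
  ∑' j : ℕ, a j • A ^ j

open Matrix Polynomial

section entrybounds

variable {m : Type*} [Fintype m] [DecidableEq m]

lemma pow_entry_bound (M : Matrix m m ℝ) {b : ℝ} (hb : ∀ i j, |M i j| ≤ b) :
    ∀ (k : ℕ) (i j : m), |(M ^ k) i j| ≤ ((Fintype.card m) * b + 1) ^ k := by
  intro k
  induction k with
  | zero =>
    intro i j
    simp only [pow_zero]
    rcases eq_or_ne i j with rfl | h
    · simp [Matrix.one_apply_eq]
    · simp [Matrix.one_apply_ne h]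
  | succ k ih =>
    intro i j
    have hb0 : 0 ≤ b := le_trans (abs_nonneg _) (hb i i)
    have hr0 : (0:ℝ) ≤ (Fintype.card m) * b + 1 := by positivity
    rw [pow_succ, Matrix.mul_apply]
    calc |∑ l, (M ^ k) i l * M l j| ≤ ∑ l, |(M ^ k) i l * M l j| := Finset.abs_sum_le_sum_abs _ _
    _ ≤ ∑ _l : m, ((Fintype.card m) * b + 1) ^ k * b := by
        apply Finset.sum_le_sum
        intro l _
        rw [abs_mul]
        exact mul_le_mul (ih i l) (hb l j) (abs_nonneg _) (pow_nonneg hr0 _)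
    _ = ((Fintype.card m) * b) * ((Fintype.card m) * b + 1) ^ k := by
        rw [Finset.sum_const, Finset.card_univ, nsmul_eq_mul]; ring
    _ ≤ ((Fintype.card m) * b + 1) ^ (k + 1) := by
        rw [pow_succ, mul_comm]
        apply mul_le_mul_of_nonneg_left _ (pow_nonneg hr0 _)
        linarith

lemma entries_bound (M : Matrix m m ℝ) :
    ∀ i j, |M i j| ≤ ∑ i', ∑ j', |M i' j'| := by
  intro i j
  have h1 : |M i j| ≤ ∑ j', |M i j'| :=
    Finset.single_le_sum (f := fun j' => |M i j'|) (fun j' _ => abs_nonneg _) (Finset.mem_univ j)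
  refine h1.trans ?_
  exact Finset.single_le_sum (f := fun i' => ∑ j', |M i' j'|)
    (fun i' _ => Finset.sum_nonneg fun _ _ => abs_nonneg _) (Finset.mem_univ i)

lemma exists_pow_bound (M : Matrix m m ℝ) :
    ∃ r : ℝ, 0 ≤ r ∧ ∀ (k : ℕ) (i j : m), |(M ^ k) i j| ≤ r ^ k := by
  classical
  have hb0 : (0:ℝ) ≤ ∑ i, ∑ j, |M i j| :=
    Finset.sum_nonneg fun _ _ => Finset.sum_nonneg fun _ _ => abs_nonneg _
  exact ⟨(Fintype.card m) * (∑ i, ∑ j, |M i j|) + 1, by positivity,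
    fun k i j => pow_entry_bound M (entries_bound M) k i j⟩

variable (a : ℕ → ℝ) (ha : ∀ r : ℝ, Summable fun j : ℕ => |a j| * r ^ j)

include ha in
lemma summable_entry (M : Matrix m m ℝ) (i j : m) :
    Summable fun k : ℕ => a k * (M ^ k) i j := by
  obtain ⟨r, hr0, hr⟩ := exists_pow_bound M
  apply Summable.of_abs
  apply Summable.of_nonneg_of_le (fun k => abs_nonneg _) _ (ha r)
  intro k
  rw [abs_mul]
  exact mul_le_mul_of_nonneg_left (hr k i j) (abs_nonneg _)

include ha in
lemma summable_fmat (M : Matrix m m ℝ) :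
    Summable fun k : ℕ => a k • M ^ k := by
  refine Pi.summable.mpr fun i => ?_
  refine Pi.summable.mpr fun j => ?_
  exact summable_entry a ha M i j

include ha in
lemma fmat_apply (M : Matrix m m ℝ) (i j : m) :
    fmat a M i j = ∑' k : ℕ, a k * (M ^ k) i j := by
  have h := summable_fmat a ha M
  rw [fmat]
  refine (congrFun (tsum_apply (f := fun k => (a k • M ^ k : m → m → ℝ)) h (x := i)) j).trans ?_
  refine (tsum_apply (Pi.summable.mp h i)).trans ?_
  rfl

end entrybounds

section conj

variable {m : Type*} [Fintype m] [DecidableEq m]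
variable (a : ℕ → ℝ) (ha : ∀ r : ℝ, Summable fun j : ℕ => |a j| * r ^ j)

lemma pow_conj {Q D P : Matrix m m ℝ} (hQP : Q * P = 1) (hPQ : P * Q = 1) (k : ℕ) :
    (Q * D * P) ^ k = Q * D ^ k * P := by
  induction k with
  | zero => simp [hQP]
  | succ k ih =>
    rw [pow_succ, ih, pow_succ]
    calc Q * D ^ k * P * (Q * D * P) = Q * D ^ k * (P * Q) * D * P := by
          simp only [Matrix.mul_assoc]
    _ = Q * (D ^ k * D) * P := by rw [hPQ]; simp only [Matrix.mul_one, Matrix.mul_assoc]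

omit [DecidableEq m] in
lemma conj_apply (Q P F : Matrix m m ℝ) (i j : m) :
    (Q * F * P) i j = ∑ p : m × m, (Q i p.1 * P p.2 j) * F p.1 p.2 := by
  rw [Fintype.sum_prod_type]
  simp only [Matrix.mul_apply, Finset.sum_mul]
  rw [Finset.sum_comm]
  refine Finset.sum_congr rfl fun l _ => Finset.sum_congr rfl fun l' _ => by ring

include ha in
lemma fmat_conj {Q D P : Matrix m m ℝ} (hQP : Q * P = 1) (hPQ : P * Q = 1) :
    fmat a (Q * D * P) = Q * fmat a D * P := by
  ext i j
  rw [fmat_apply a ha, conj_apply]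
  calc (∑' k, a k * ((Q * D * P) ^ k) i j)
      = ∑' k, ∑ p : m × m, (Q i p.1 * P p.2 j) * (a k * (D ^ k) p.1 p.2) := by
        refine tsum_congr fun k => ?_
        rw [pow_conj hQP hPQ, conj_apply, Finset.mul_sum]
        exact Finset.sum_congr rfl fun p _ => by ring
    _ = ∑ p : m × m, ∑' k, (Q i p.1 * P p.2 j) * (a k * (D ^ k) p.1 p.2) := by
        refine Summable.tsum_finsetSum fun p _ => ?_
        exact (summable_entry a ha D p.1 p.2).mul_left _
    _ = ∑ p : m × m, (Q i p.1 * P p.2 j) * fmat a D p.1 p.2 := by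
        refine Finset.sum_congr rfl fun p _ => ?_
        rw [tsum_mul_left, fmat_apply a ha]

end conj

section blocks

variable {m n : Type*} [Fintype m] [DecidableEq m] [Fintype n] [DecidableEq n]
variable (a : ℕ → ℝ) (ha : ∀ r : ℝ, Summable fun j : ℕ => |a j| * r ^ j)

lemma pow_blocks (A : Matrix m m ℝ) (B : Matrix m n ℝ) (C : Matrix n n ℝ) (k : ℕ) :
    ∃ D, (fromBlocks A B 0 C) ^ k = fromBlocks (A ^ k) D 0 (C ^ k) := by
  induction k with
  | zero => exact ⟨0, by simp [Matrix.fromBlocks_one]⟩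
  | succ k ih =>
    obtain ⟨D, hD⟩ := ih
    refine ⟨A ^ k * B + D * C, ?_⟩
    rw [pow_succ, hD, Matrix.fromBlocks_multiply]
    simp [pow_succ]

include ha in
lemma fmat_blocks_11 (A : Matrix m m ℝ) (B : Matrix m n ℝ) (C : Matrix n n ℝ) (i j : m) :
    fmat a (fromBlocks A B 0 C) (Sum.inl i) (Sum.inl j) = fmat a A i j := by
  rw [fmat_apply a ha, fmat_apply a ha]
  refine tsum_congr fun k => ?_
  obtain ⟨D, hD⟩ := pow_blocks A B C k
  rw [hD]
  rfl

include ha in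
lemma fmat_blocks_22 (A : Matrix m m ℝ) (B : Matrix m n ℝ) (C : Matrix n n ℝ) (i j : n) :
    fmat a (fromBlocks A B 0 C) (Sum.inr i) (Sum.inr j) = fmat a C i j := by
  rw [fmat_apply a ha, fmat_apply a ha]
  refine tsum_congr fun k => ?_
  obtain ⟨D, hD⟩ := pow_blocks A B C k
  rw [hD]
  rfl

include ha in
lemma fmat_blocks_21 (A : Matrix m m ℝ) (B : Matrix m n ℝ) (C : Matrix n n ℝ) (i : n) (j : m) :
    fmat a (fromBlocks A B 0 C) (Sum.inr i) (Sum.inl j) = 0 := by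
  rw [fmat_apply a ha]
  have : ∀ k : ℕ, a k * ((fromBlocks A B 0 C) ^ k) (Sum.inr i) (Sum.inl j) = 0 := by
    intro k
    obtain ⟨D, hD⟩ := pow_blocks A B C k
    rw [hD]
    simp [Matrix.fromBlocks_apply₂₁]
  calc (∑' k, a k * ((fromBlocks A B 0 C) ^ k) (Sum.inr i) (Sum.inl j))
      = ∑' _k : ℕ, (0:ℝ) := tsum_congr this
  _ = 0 := tsum_zero

lemma pow_blocks_diag (A : Matrix m m ℝ) (C : Matrix n n ℝ) (k : ℕ) :
    (fromBlocks A 0 0 C) ^ k = fromBlocks (A ^ k) 0 0 (C ^ k) := by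
  induction k with
  | zero => simp [Matrix.fromBlocks_one]
  | succ k ih => rw [pow_succ, ih, Matrix.fromBlocks_multiply]; simp [pow_succ]

include ha in
lemma fmat_blocks_diag (A : Matrix m m ℝ) (C : Matrix n n ℝ) :
    fmat a (fromBlocks A 0 0 C) = fromBlocks (fmat a A) 0 0 (fmat a C) := by
  ext i j
  rcases i with i | i <;> rcases j with j | j <;>
    rw [fmat_apply a ha] <;>
    simp only [pow_blocks_diag] <;>
    [skip; simp [tsum_zero, fromBlocks_apply₁₂]; simp [tsum_zero, fromBlocks_apply₂₁]; skip]
  · rw [fromBlocks_apply₁₁, fmat_apply a ha]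
    exact tsum_congr fun k => by rw [fromBlocks_apply₁₁]
  · rw [fromBlocks_apply₂₂, fmat_apply a ha]
    exact tsum_congr fun k => by rw [fromBlocks_apply₂₂]

include ha in
lemma key_identity (A : Matrix m m ℝ) (B : Matrix m n ℝ) (C : Matrix n n ℝ)
    (X : Matrix m n ℝ) (hX : A * X - X * C = B) :
    fmat a (fromBlocks A B 0 C) =
      fromBlocks (fmat a A) (fmat a A * X - X * fmat a C) 0 (fmat a C) := by
  set S : Matrix (m ⊕ n) (m ⊕ n) ℝ := fromBlocks 1 X 0 1 with hS
  set S' : Matrix (m ⊕ n) (m ⊕ n) ℝ := fromBlocks 1 (-X) 0 1 with hS'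
  have hS'S : S' * S = 1 := by
    rw [hS, hS', Matrix.fromBlocks_multiply, ← Matrix.fromBlocks_one]
    congr 1 <;> simp
  have hSS' : S * S' = 1 := by
    rw [hS, hS', Matrix.fromBlocks_multiply, ← Matrix.fromBlocks_one]
    congr 1 <;> simp
  have hT : fromBlocks A B 0 C = S' * fromBlocks A 0 0 C * S := by
    rw [hS, hS', Matrix.fromBlocks_multiply, Matrix.fromBlocks_multiply]
    congr 1 <;> simp [← hX, sub_eq_add_neg]
  rw [hT, fmat_conj a ha hS'S hSS', fmat_blocks_diag a ha, hS, hS',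
    Matrix.fromBlocks_multiply, Matrix.fromBlocks_multiply]
  congr 1 <;> simp [sub_eq_add_neg]

end blocks

section reindex

variable {l m : Type*} [Fintype l] [DecidableEq l] [Fintype m] [DecidableEq m]
variable (a : ℕ → ℝ) (ha : ∀ r : ℝ, Summable fun j : ℕ => |a j| * r ^ j)

include ha in
lemma fmat_submatrix (e : l ≃ m) (M : Matrix m m ℝ) :
    fmat a (M.submatrix e e) = (fmat a M).submatrix e e := by
  ext i j
  rw [Matrix.submatrix_apply, fmat_apply a ha, fmat_apply a ha]
  refine tsum_congr fun k => ?_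
  have hp : (M.submatrix e e) ^ k = (M ^ k).submatrix e e := by
    have h1 : M.submatrix (⇑e) (⇑e) = (Matrix.reindexAlgEquiv ℝ ℝ e.symm) M := by
      simp [Matrix.reindexAlgEquiv_apply, Matrix.reindex_apply]
    have h2 : (M ^ k).submatrix (⇑e) (⇑e) = (Matrix.reindexAlgEquiv ℝ ℝ e.symm) (M ^ k) := by
      simp [Matrix.reindexAlgEquiv_apply, Matrix.reindex_apply]
    rw [h1, h2, map_pow]
  rw [hp, Matrix.submatrix_apply]

end reindex

section spectra

lemma charpoly_det_eq {n : Type*} [Fintype n] [DecidableEq n] (M : Matrix n n ℂ) (k : ℂ) :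
    (algebraMap ℂ (Matrix n n ℂ) k - M).det = M.charpoly.eval k := by
  have e1 : (algebraMap ℂ (Matrix n n ℂ) k - M) = (evalRingHom k).mapMatrix (charmatrix M) := by
    ext i j
    rcases eq_or_ne i j with rfl | hij
    · simp [Matrix.algebraMap_matrix_apply, charmatrix_apply_eq]
    · simp [Matrix.algebraMap_matrix_apply, charmatrix_apply_ne _ _ _ hij, hij]
  rw [e1, ← RingHom.map_det]
  rfl

lemma mem_spectrum_of_root {n : Type*} [Fintype n] [DecidableEq n] (M : Matrix n n ℂ) (k : ℂ)
    (h : M.charpoly.eval k = 0) : k ∈ spectrum ℂ M := by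
  rw [spectrum.mem_iff]
  intro hu
  have hdet := (Matrix.isUnit_iff_isUnit_det _).mp hu
  rw [charpoly_det_eq, h] at hdet
  simp at hdet

variable {m n : Type*} [Fintype m] [DecidableEq m] [Fintype n] [DecidableEq n]

lemma sylvester_exists (A : Matrix m m ℝ) (C : Matrix n n ℝ)
    (h : Disjoint (spectrum ℂ (A.map Complex.ofReal)) (spectrum ℂ (C.map Complex.ofReal)))
    (B : Matrix m n ℝ) : ∃ X : Matrix m n ℝ, A * X - X * C = B := by
  classical
  set L : Matrix m n ℝ →ₗ[ℝ] Matrix m n ℝ :=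
    { toFun := fun X => A * X - X * C
      map_add' := fun X Y => by
        show A * (X + Y) - (X + Y) * C = (A * X - X * C) + (A * Y - Y * C)
        rw [Matrix.mul_add, Matrix.add_mul]; abel
      map_smul' := fun c X => by
        simp [Matrix.mul_smul, Matrix.smul_mul, smul_sub] } with hL
  have hinj : Function.Injective L := by
    rw [← LinearMap.ker_eq_bot, eq_bot_iff]
    intro X hX
    simp only [LinearMap.mem_ker, hL, LinearMap.coe_mk, AddHom.coe_mk, sub_eq_zero] at hX
    set Ac := A.map Complex.ofReal with hAc
    set Cc := C.map Complex.ofReal with hCc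
    set Xc := X.map Complex.ofReal with hXc
    have hmul : Ac * Xc = Xc * Cc := by
      have h2 := congrArg (fun M : Matrix m n ℝ => M.map (Complex.ofRealHom : ℝ →+* ℂ)) hX
      simp only [Matrix.map_mul] at h2
      exact h2
    have hpow : ∀ k : ℕ, Ac ^ k * Xc = Xc * Cc ^ k := by
      intro k
      induction k with
      | zero => simp
      | succ k ih =>
        rw [pow_succ, pow_succ, Matrix.mul_assoc, hmul, ← Matrix.mul_assoc, ih, Matrix.mul_assoc]
    have haeval : ∀ p : ℂ[X], aeval Ac p * Xc = Xc * aeval Cc p := by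
      intro p
      induction p using Polynomial.induction_on' with
      | add p q hp hq => rw [map_add, map_add, Matrix.add_mul, Matrix.mul_add, hp, hq]
      | monomial k c =>
        rw [aeval_monomial, aeval_monomial, ← Algebra.smul_def, ← Algebra.smul_def,
          Matrix.smul_mul, hpow, Matrix.mul_smul]
    have hp0 : aeval Ac (Cc.charpoly) * Xc = 0 := by
      rw [haeval, Matrix.aeval_self_charpoly, Matrix.mul_zero]
    have hXc0 : Xc = 0 := by
      by_cases hu : IsUnit (aeval Ac (Cc.charpoly))
      · obtain ⟨u, hu⟩ := hu
        calc Xc = (↑u⁻¹ : Matrix m m ℂ) * ((↑u : Matrix m m ℂ) * Xc) := by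
              rw [← Matrix.mul_assoc, Units.inv_mul, Matrix.one_mul]
        _ = 0 := by rw [hu, hp0, Matrix.mul_zero]
      · exfalso
        have hmon := Cc.charpoly_monic
        have hnu : ¬IsUnit (aeval Ac
            (Multiset.map (fun x : ℂ => (Polynomial.X : ℂ[X]) - Polynomial.C x)
              (Cc.charpoly).roots).prod) := by
          rwa [← (IsAlgClosed.splits _).eq_prod_roots_of_monic hmon]
        obtain ⟨k, hkA, hkroot⟩ := spectrum.exists_mem_of_not_isUnit_aeval_prod hnu
        have hkC : k ∈ spectrum ℂ Cc := mem_spectrum_of_root Cc k hkroot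
        exact Set.disjoint_left.mp h hkA hkC
    ext i j
    have h3 := congrFun (congrFun hXc0 i) j
    simpa [hXc, Matrix.map_apply] using h3
  have hsurj : Function.Surjective L := (LinearMap.injective_iff_surjective).mp hinj
  obtain ⟨X, hXB⟩ := hsurj B
  exact ⟨X, hXB⟩

/-- the set of `t` for which the spectra of `A + t•1` and `C` intersect is finite. -/
lemma bad_set_finite (A : Matrix m m ℝ) (C : Matrix n n ℝ) :
    {t : ℝ | ¬ Disjoint (spectrum ℂ ((A + t • 1).map Complex.ofReal))
      (spectrum ℂ (C.map Complex.ofReal))}.Finite := by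
  classical
  set Ac := A.map Complex.ofReal with hAc
  set Cc := C.map Complex.ofReal with hCc
  have hmap : ∀ t : ℝ, (A + t • 1).map Complex.ofReal = Ac + algebraMap ℂ _ (t:ℂ) := by
    intro t
    ext i j
    rcases eq_or_ne i j with rfl | hij
    · simp [Matrix.map_apply, Matrix.add_apply, Matrix.smul_apply, Matrix.one_apply_eq,
        Matrix.algebraMap_matrix_apply, hAc]
    · simp [Matrix.map_apply, Matrix.add_apply, Matrix.smul_apply, Matrix.one_apply_ne hij,
        Matrix.algebraMap_matrix_apply, hij, hAc]
  have hfin : (((fun p : ℂ × ℂ => p.1 - p.2) ''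
      ((spectrum ℂ Cc) ×ˢ (spectrum ℂ Ac)))).Finite :=
    ((Matrix.finite_spectrum Cc).prod (Matrix.finite_spectrum Ac)).image _
  apply Set.Finite.subset ((hfin.preimage ((Complex.ofReal_injective).injOn)))
  intro t ht
  simp only [Set.mem_setOf_eq] at ht
  rw [hmap t, ← spectrum.add_singleton_eq] at ht
  obtain ⟨z, hz1, hz2⟩ := Set.not_disjoint_iff.mp ht
  obtain ⟨lam, hlam, r, hr, hzr⟩ := Set.mem_add.mp hz1
  simp only [Set.mem_singleton_iff] at hr
  subst hr
  refine ⟨(z, lam), ⟨hz2, hlam⟩, ?_⟩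
  simp [← hzr]

end spectra

section descend

variable (a : ℕ → ℝ) (ha : ∀ r : ℝ, Summable fun j : ℕ => |a j| * r ^ j)

include ha in
lemma F_descend {N k : ℕ} (hk : k ≤ N)
    (hF : ∀ M : Matrix (Fin N) (Fin N) ℝ, (∀ i j, 0 ≤ M i j) → ∀ i j, 0 ≤ fmat a M i j)
    (M : Matrix (Fin k) (Fin k) ℝ) (hM : ∀ i j, 0 ≤ M i j) :
    ∀ i j, 0 ≤ fmat a M i j := by
  intro i j
  have hNk : k + (N - k) = N := Nat.add_sub_cancel' hk
  set e : Fin k ⊕ Fin (N - k) ≃ Fin N := finSumFinEquiv.trans (finCongr hNk) with he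
  set T : Matrix (Fin k ⊕ Fin (N - k)) (Fin k ⊕ Fin (N - k)) ℝ := fromBlocks M 0 0 0 with hT
  have hTnn : ∀ p q, 0 ≤ T p q := by
    rintro (p | p) (q | q) <;> simp [hT, Matrix.fromBlocks_apply₁₁, hM]
  set M' : Matrix (Fin N) (Fin N) ℝ := T.submatrix e.symm e.symm with hM'
  have hM'nn : ∀ p q, 0 ≤ M' p q := fun p q => hTnn _ _
  have h1 := hF M' hM'nn (e (Sum.inl i)) (e (Sum.inl j))
  have h2 : fmat a M' = (fmat a T).submatrix e.symm e.symm := fmat_submatrix a ha e.symm T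
  rw [h2] at h1
  simp only [Matrix.submatrix_apply, Equiv.symm_apply_apply] at h1
  rwa [fmat_blocks_11 a ha M 0 0 i j] at h1

end descend

/-- `f` preserves nonnegativity of block upper-triangular matrices
`[[A,B],[0,C]]` (with `A` of size `n1`, `C` of size `n2`) iff (a) `f ∈ F_N`
with `N = max n1 n2`, and (b) for all nonnegative `A, B, C` with disjoint
complex spectra of `A` and `C`, the solution `X` of `AX - XC = B` satisfies
`f(A)X - Xf(C) ≥ 0`. -/
theorem stmt_8 (a : ℕ → ℝ) (ha : ∀ r : ℝ, Summable fun j : ℕ => |a j| * r ^ j)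
    (n1 n2 : ℕ) (hn1 : 0 < n1) (hn2 : 0 < n2) :
    (∀ (A : Matrix (Fin n1) (Fin n1) ℝ) (B : Matrix (Fin n1) (Fin n2) ℝ)
        (C : Matrix (Fin n2) (Fin n2) ℝ),
      (∀ i j, 0 ≤ A i j) → (∀ i j, 0 ≤ B i j) → (∀ i j, 0 ≤ C i j) →
      ∀ i j, 0 ≤ fmat a (Matrix.fromBlocks A B 0 C) i j) ↔
    ((∀ M : Matrix (Fin (max n1 n2)) (Fin (max n1 n2)) ℝ,
        (∀ i j, 0 ≤ M i j) → ∀ i j, 0 ≤ fmat a M i j) ∧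
     (∀ (A : Matrix (Fin n1) (Fin n1) ℝ) (B : Matrix (Fin n1) (Fin n2) ℝ)
         (C : Matrix (Fin n2) (Fin n2) ℝ),
       (∀ i j, 0 ≤ A i j) → (∀ i j, 0 ≤ B i j) → (∀ i j, 0 ≤ C i j) →
       Disjoint (spectrum ℂ (A.map Complex.ofReal)) (spectrum ℂ (C.map Complex.ofReal)) →
       ∀ X : Matrix (Fin n1) (Fin n2) ℝ, A * X - X * C = B →
         ∀ i j, 0 ≤ (fmat a A * X - X * fmat a C) i j)) := by
  constructor
  · intro H
    constructor
    · -- f ∈ F_{max n1 n2}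
      intro M hM i j
      rcases max_choice n1 n2 with h | h
      · set e : Fin (max n1 n2) ≃ Fin n1 := finCongr h with he
        set A : Matrix (Fin n1) (Fin n1) ℝ := M.submatrix e.symm e.symm with hA
        have hAnn : ∀ i j, 0 ≤ A i j := fun i j => hM _ _
        have h1 := H A 0 0 hAnn (fun _ _ => le_refl 0) (fun _ _ => le_refl 0)
          (Sum.inl (e i)) (Sum.inl (e j))
        rw [fmat_blocks_11 a ha A 0 0] at h1
        have h2 : fmat a A = (fmat a M).submatrix e.symm e.symm := fmat_submatrix a ha e.symm M
        rw [h2] at h1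
        simpa using h1
      · set e : Fin (max n1 n2) ≃ Fin n2 := finCongr h with he
        set A : Matrix (Fin n2) (Fin n2) ℝ := M.submatrix e.symm e.symm with hA
        have hAnn : ∀ i j, 0 ≤ A i j := fun i j => hM _ _
        have h1 := H 0 0 A (fun _ _ => le_refl 0) (fun _ _ => le_refl 0) hAnn
          (Sum.inr (e i)) (Sum.inr (e j))
        rw [fmat_blocks_22 a ha 0 0 A] at h1
        have h2 : fmat a A = (fmat a M).submatrix e.symm e.symm := fmat_submatrix a ha e.symm M
        rw [h2] at h1
        simpa using h1
    · intro A B C hA hB hC _hdisj X hX i j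
      have h1 := H A B C hA hB hC (Sum.inl i) (Sum.inr j)
      rw [key_identity a ha A B C X hX] at h1
      simpa [Matrix.fromBlocks_apply₁₂] using h1
  · rintro ⟨hF, hS⟩ A B C hA hB hC i j
    have hF1 : ∀ M : Matrix (Fin n1) (Fin n1) ℝ, (∀ i j, 0 ≤ M i j) →
        ∀ i j, 0 ≤ fmat a M i j := F_descend a ha (le_max_left n1 n2) hF
    have hF2 : ∀ M : Matrix (Fin n2) (Fin n2) ℝ, (∀ i j, 0 ≤ M i j) →
        ∀ i j, 0 ≤ fmat a M i j := F_descend a ha (le_max_right n1 n2) hF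
    rcases i with i | i <;> rcases j with j | j
    · rw [fmat_blocks_11 a ha A B C]
      exact hF1 A hA i j
    · -- the hard off-diagonal block, by perturbation and continuity
      classical
      set cl : ℝ → ℝ := fun t => min 1 (max t 0) with hcl
      have hcl_cont : Continuous cl := (continuous_const.min (continuous_id.max continuous_const))
      have hcl_mem : ∀ t, 0 ≤ cl t ∧ cl t ≤ 1 := fun t =>
        ⟨le_min zero_le_one (le_max_right t 0), min_le_left _ _⟩
      set T : ℝ → Matrix (Fin n1 ⊕ Fin n2) (Fin n1 ⊕ Fin n2) ℝ :=
        fun t => fromBlocks (A + cl t • 1) B 0 C with hTdef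
      -- entrywise continuity of T
      have hTc : ∀ p q, Continuous fun t => T t p q := by
        rintro (p | p) (q | q)
        · have : (fun t => T t (Sum.inl p) (Sum.inl q))
              = fun t => A p q + cl t * (1 : Matrix (Fin n1) (Fin n1) ℝ) p q := by
            funext t
            simp [hTdef, Matrix.fromBlocks_apply₁₁, Matrix.add_apply, Matrix.smul_apply,
              smul_eq_mul]
          rw [this]
          exact continuous_const.add (hcl_cont.mul continuous_const)
        · exact continuous_const
        · exact continuous_const
        · exact continuous_const
      -- uniform entry bound for T
      set b : ℝ := (∑ p, ∑ q, |A p q|) + (∑ p, ∑ q, |B p q|) + (∑ p, ∑ q, |C p q|) + 1 with hbdef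
      have hAb : ∀ p q, |A p q| ≤ ∑ p, ∑ q, |A p q| := entries_bound A
      have hsums_nonneg : (0:ℝ) ≤ ∑ p, ∑ q, |B p q| :=
        Finset.sum_nonneg fun _ _ => Finset.sum_nonneg fun _ _ => abs_nonneg _
      have hsums_nonneg' : (0:ℝ) ≤ ∑ p, ∑ q, |C p q| :=
        Finset.sum_nonneg fun _ _ => Finset.sum_nonneg fun _ _ => abs_nonneg _
      have hsums_nonneg'' : (0:ℝ) ≤ ∑ p, ∑ q, |A p q| :=
        Finset.sum_nonneg fun _ _ => Finset.sum_nonneg fun _ _ => abs_nonneg _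
      have hBb : ∀ p q, |B p q| ≤ ∑ p', ∑ q', |B p' q'| := by
        intro p q
        have h1 : |B p q| ≤ ∑ q', |B p q'| :=
          Finset.single_le_sum (f := fun q' => |B p q'|) (fun _ _ => abs_nonneg _)
            (Finset.mem_univ q)
        exact h1.trans (Finset.single_le_sum (f := fun p' => ∑ q', |B p' q'|)
          (fun _ _ => Finset.sum_nonneg fun _ _ => abs_nonneg _) (Finset.mem_univ p))
      have hCb : ∀ p q, |C p q| ≤ ∑ p', ∑ q', |C p' q'| := entries_bound C
      have hTb : ∀ t p q, |T t p q| ≤ b := by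
        rintro t (p | p) (q | q)
        · have : T t (Sum.inl p) (Sum.inl q)
              = A p q + cl t * (1 : Matrix (Fin n1) (Fin n1) ℝ) p q := by
            simp [hTdef, Matrix.fromBlocks_apply₁₁, Matrix.add_apply, Matrix.smul_apply,
              smul_eq_mul]
          rw [this]
          have h1 : |cl t * (1 : Matrix (Fin n1) (Fin n1) ℝ) p q| ≤ 1 := by
            rw [abs_mul]
            have h2 : |cl t| ≤ 1 := abs_le.mpr ⟨by linarith [(hcl_mem t).1], (hcl_mem t).2⟩
            have h3 : |(1 : Matrix (Fin n1) (Fin n1) ℝ) p q| ≤ 1 := by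
              rcases eq_or_ne p q with rfl | hpq
              · simp [Matrix.one_apply_eq]
              · simp [Matrix.one_apply_ne hpq]
            calc |cl t| * |(1 : Matrix (Fin n1) (Fin n1) ℝ) p q| ≤ 1 * 1 :=
                  mul_le_mul h2 h3 (abs_nonneg _) zero_le_one
            _ = 1 := by ring
          calc |A p q + cl t * (1 : Matrix (Fin n1) (Fin n1) ℝ) p q|
              ≤ |A p q| + |cl t * (1 : Matrix (Fin n1) (Fin n1) ℝ) p q| := abs_add_le _ _
          _ ≤ (∑ p, ∑ q, |A p q|) + 1 := add_le_add (hAb p q) h1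
          _ ≤ b := by rw [hbdef]; linarith
        · have : T t (Sum.inl p) (Sum.inr q) = B p q := rfl
          rw [this]
          calc |B p q| ≤ ∑ p', ∑ q', |B p' q'| := hBb p q
          _ ≤ b := by rw [hbdef]; linarith
        · have : T t (Sum.inr p) (Sum.inl q) = 0 := rfl
          rw [this]
          simp [hbdef]; linarith
        · have : T t (Sum.inr p) (Sum.inr q) = C p q := rfl
          rw [this]
          calc |C p q| ≤ ∑ p', ∑ q', |C p' q'| := hCb p q
          _ ≤ b := by rw [hbdef]; linarith
      set r : ℝ := (Fintype.card (Fin n1 ⊕ Fin n2)) * b + 1 with hrdef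
      have hpowb : ∀ t (k : ℕ) p q, |(T t ^ k) p q| ≤ r ^ k := by
        intro t k p q
        exact pow_entry_bound (T t) (fun p q => hTb t p q) k p q
      -- continuity of entries of powers
      have hpowc : ∀ (k : ℕ) p q, Continuous fun t => (T t ^ k) p q := by
        intro k
        induction k with
        | zero => intro p q; simp only [pow_zero]; exact continuous_const
        | succ k ih =>
          intro p q
          have : (fun t => (T t ^ (k+1)) p q) = fun t => ∑ l, (T t ^ k) p l * T t l q := by
            funext t
            rw [pow_succ, Matrix.mul_apply]
          rw [this]
          exact continuous_finset_sum _ fun l _ => (ih p l).mul (hTc l q)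
      -- the entry function and its continuity
      set g : ℝ → ℝ := fun t => ∑' k : ℕ, a k * (T t ^ k) (Sum.inl i) (Sum.inr j) with hgdef
      have hgc : Continuous g := by
        apply continuous_tsum (f := fun (k : ℕ) (t : ℝ) => a k * (T t ^ k) (Sum.inl i) (Sum.inr j))
          (u := fun k => |a k| * r ^ k)
        · intro k
          exact continuous_const.mul (hpowc k _ _)
        · exact ha r
        · intro k t
          rw [Real.norm_eq_abs, abs_mul]
          exact mul_le_mul_of_nonneg_left (hpowb t k _ _) (abs_nonneg _)
      -- the good values of t
      set Bad : Set ℝ := {t : ℝ | ¬ Disjoint (spectrum ℂ ((A + t • 1).map Complex.ofReal))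
        (spectrum ℂ (C.map Complex.ofReal))} with hBadDef
      have hBadFin : Bad.Finite := bad_set_finite A C
      have hpick : ∀ k : ℕ, ∃ t : ℝ, t ∈ Set.Ioo (0:ℝ) (1/(k+1)) \ Bad := by
        intro k
        have hlt : (0:ℝ) < 1/(k+1) := by positivity
        exact ((Set.Ioo_infinite hlt).diff hBadFin).nonempty
      choose t ht using hpick
      have ht0 : ∀ k, 0 < t k := fun k => (ht k).1.1
      have ht1 : ∀ k, t k ≤ 1 := by
        intro k
        have h2 : t k < 1/(k+1) := (ht k).1.2
        have h3 : (1:ℝ)/(k+1) ≤ 1 := by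
          rw [div_le_one (by positivity)]
          have : (0:ℝ) ≤ k := Nat.cast_nonneg k
          linarith
        linarith
      have htends : Filter.Tendsto t Filter.atTop (nhds 0) := by
        apply squeeze_zero (fun k => (ht0 k).le) (fun k => ((ht k).1.2).le)
        exact tendsto_one_div_add_atTop_nhds_zero_nat
      -- nonnegativity along the sequence
      have hgt : ∀ k, 0 ≤ g (t k) := by
        intro k
        have hclk : cl (t k) = t k := by
          show min 1 (max (t k) 0) = t k
          rw [max_eq_left (ht0 k).le, min_eq_right (ht1 k)]
        set A' : Matrix (Fin n1) (Fin n1) ℝ := A + t k • 1 with hA'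
        have hTk : T (t k) = fromBlocks A' B 0 C := by
          rw [hTdef]; simp only [hclk, hA']
        have hA'nn : ∀ p q, 0 ≤ A' p q := by
          intro p q
          rcases eq_or_ne p q with rfl | hpq
          · simp only [hA', Matrix.add_apply, Matrix.smul_apply, Matrix.one_apply_eq,
              smul_eq_mul, mul_one]
            exact add_nonneg (hA p p) (ht0 k).le
          · simp only [hA', Matrix.add_apply, Matrix.smul_apply, Matrix.one_apply_ne hpq,
              smul_eq_mul, mul_zero, add_zero]
            exact hA p q
        have hdisj : Disjoint (spectrum ℂ (A'.map Complex.ofReal))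
            (spectrum ℂ (C.map Complex.ofReal)) := by
          have := (ht k).2
          rw [hBadDef] at this
          simpa [hA'] using not_not.mp (by simpa using this)
        obtain ⟨X, hX⟩ := sylvester_exists A' C hdisj B
        have hfB := hS A' B C hA'nn hB hC hdisj X hX i j
        have hgteq : g (t k) = fmat a (T (t k)) (Sum.inl i) (Sum.inr j) :=
          (fmat_apply a ha (T (t k)) _ _).symm
        rw [hgteq, hTk, key_identity a ha A' B C X hX]
        simpa [Matrix.fromBlocks_apply₁₂] using hfB
      -- pass to the limit
      have hglim : Filter.Tendsto (fun k => g (t k)) Filter.atTop (nhds (g 0)) :=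
        (hgc.tendsto 0).comp htends
      have hg0 : 0 ≤ g 0 := ge_of_tendsto' hglim hgt
      have hT0 : T 0 = fromBlocks A B 0 C := by
        rw [hTdef]
        have : cl 0 = 0 := by rw [hcl]; simp
        simp [this]
      have : g 0 = fmat a (fromBlocks A B 0 C) (Sum.inl i) (Sum.inr j) := by
        rw [hgdef]
        simp only [hT0]
        exact (fmat_apply a ha _ _ _).symm
      linarith [this ▸ hg0]
    · rw [fmat_blocks_21 a ha A B C]
    · rw [fmat_blocks_22 a ha A B C]
      exact hF2 C hC i j
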